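/- Let F = ℚ(√d) with d ≥ 1 a squarefree integer, d ≠ 1 and d ≠ 3, equipped with the positive-definite form ⟨α,β⟩ = Tr(α·β̄) (with β̄ the conjugate, in either the real form x²+dy² or the corresponding split setting). Then there exist no x₁,y₁,x₂,y₂ ∈ ℚ satisfying x₁² + d y₁² = 1, x₂² + d y₂² = 1, and 2x₁x₂ + 2d y₁y₂ = −1; consequently F contains no lattice of type A₂. -/

import Mathlib

open Module


lemma no_rat_sq (d k : ℤ) (hd1 : 1 ≤ d) (hsq : Squarefree d) (hk : k = 3 ∨ k = 1)
    (hne : d ≠ k) (q : ℚ) : (d : ℚ) * q ^ 2 ≠ (k : ℚ) := by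
  intro h
  have hk1 : 1 ≤ k := by rcases hk with h|h <;> omega
  have hq0 : q ≠ 0 := by
    rintro rfl
    simp at h
    have : (k : ℚ) ≠ 0 := by exact_mod_cast (by omega : k ≠ 0)
    exact this h.symm
  have key : d * q.num ^ 2 = k * (q.den : ℤ) ^ 2 := by
    have hden : (q.den : ℚ) ≠ 0 := by exact_mod_cast q.den_ne_zero
    have h2 : q = (q.num : ℚ) / (q.den : ℚ) := (Rat.num_div_den q).symm
    rw [h2] at h
    field_simp at h
    rw [mul_comm (k : ℤ)]
    exact_mod_cast h
  have hn0 : q.num ≠ 0 := Rat.num_ne_zero.mpr hq0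
  have hcop : IsCoprime q.num (q.den : ℤ) := by
    rw [Int.isCoprime_iff_gcd_eq_one]; exact q.reduced
  have hcop2 : IsCoprime (q.num ^ 2) ((q.den : ℤ) ^ 2) := hcop.pow
  have hdvd : q.num ^ 2 ∣ k := by
    have h1 : q.num ^ 2 ∣ k * (q.den : ℤ) ^ 2 := ⟨d, by linarith [key]⟩
    exact IsCoprime.dvd_of_dvd_mul_right hcop2 h1
  have hle : q.num ^ 2 ≤ k := Int.le_of_dvd (by omega) hdvd
  have hle3 : q.num ^ 2 ≤ 3 := by rcases hk with h|h <;> omega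
  have hnum : q.num ^ 2 = 1 := by
    rcases (show q.num ≤ -2 ∨ q.num = -1 ∨ q.num = 1 ∨ 2 ≤ q.num from by omega)
      with h'|h'|h'|h'
    · nlinarith
    · rw [h']; ring
    · rw [h']; ring
    · nlinarith
  have hd : d = k * (q.den : ℤ) ^ 2 := by nlinarith [key]
  have hu : IsUnit (q.den : ℤ) := hsq _ ⟨k, by linarith [hd]⟩
  have hden1 : (q.den : ℤ) ^ 2 = 1 := by
    rcases Int.isUnit_iff.mp hu with h'|h' <;> rw [h'] <;> ring
  rw [hden1, mul_one] at hd
  exact hne hd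

lemma li (d : ℤ) (hd1 : 1 ≤ d) (hsq : Squarefree d) (hne1 : d ≠ 1)
    (F : Type*) [Field F] [NumberField F]
    (s : F) (hs : s ^ 2 = (d : F) ∨ s ^ 2 = -(d : F)) :
    LinearIndependent ℚ ![(1 : F), s] := by
  rw [LinearIndependent.pair_iff]
  intro a b hab
  by_contra hcon
  rw [Algebra.smul_def, Algebra.smul_def, mul_one] at hab
  have hb : b ≠ 0 := by
    rintro rfl
    simp only [map_zero, zero_mul, add_zero] at hab
    exact hcon ⟨(algebraMap ℚ F).injective (by simpa using hab), rfl⟩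
  have hbF : algebraMap ℚ F b ≠ 0 := fun h => hb ((algebraMap ℚ F).injective (by simpa using h))
  have hsval : s = algebraMap ℚ F (-a / b) := by
    rw [map_div₀, map_neg, eq_div_iff hbF]
    linear_combination hab
  have hq : (algebraMap ℚ F ((-a / b) ^ 2)) = s ^ 2 := by rw [hsval]; push_cast; ring
  have hinj := (algebraMap ℚ F).injective
  rcases hs with h | h
  · have hqd : (-a / b) ^ 2 = (d : ℚ) := by
      apply hinj
      rw [hq, h]
      simp [map_intCast]
    have hq0 : (-a / b) ≠ 0 := by
      intro h0
      rw [h0] at hqd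
      simp at hqd
      exact absurd hqd.symm (by exact_mod_cast (by omega : d ≠ 0))
    have ha : a ≠ 0 := fun h0 => hq0 (by rw [h0]; simp)
    have hqd' : a ^ 2 = (d : ℚ) * b ^ 2 := by
      field_simp at hqd
      linarith [hqd]
    have hfin : (d : ℚ) * (b / a) ^ 2 = ((1 : ℤ) : ℚ) := by
      push_cast
      field_simp
      linarith [hqd']
    exact no_rat_sq d 1 hd1 hsq (Or.inr rfl) hne1 _ hfin
  · have hqd : (-a / b) ^ 2 = -(d : ℚ) := by
      apply hinj
      rw [hq, h]
      simp [map_intCast]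
    have h1 : (0:ℚ) ≤ (-a/b) ^ 2 := sq_nonneg _
    have h2 : (1:ℚ) ≤ (d:ℚ) := by exact_mod_cast hd1
    linarith [hqd]


/-- Let `F = ℚ(√(±d))` with `d ≥ 1` squarefree, `d ≠ 1`, `d ≠ 3`,
equipped with the positive-definite form `⟨α, β⟩ = Tr(α·β̄)` where `β̄` is the
conjugation `σ` (complex conjugation, i.e. the identity in the real case). Then there
exist no `x₁, y₁, x₂, y₂ ∈ ℚ` with `x₁² + d y₁² = 1`, `x₂² + d y₂² = 1`, and
`2 x₁ x₂ + 2 d y₁ y₂ = −1`; consequently `F` contains no lattice of type `A₂`, i.e. no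
sub-`ℤ`-module with a basis `(e₁, e₂)` satisfying `⟨e₁, e₁⟩ = ⟨e₂, e₂⟩ = 2` and
`⟨e₁, e₂⟩ = −1`. -/
theorem stmt19 (d : ℤ) (hd1 : 1 ≤ d) (hsq : Squarefree d) (hne1 : d ≠ 1) (hne3 : d ≠ 3)
    (F : Type*) [Field F] [NumberField F] (hdeg : Module.finrank ℚ F = 2)
    (s : F) (hs : s ^ 2 = (d : F) ∨ s ^ 2 = -(d : F))
    (σ : F ≃ₐ[ℚ] F)
    (hσ : ∀ φ : F →+* ℂ, ∀ x : F, φ (σ x) = (starRingEnd ℂ) (φ x)) :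
    (¬ ∃ x₁ y₁ x₂ y₂ : ℚ,
        x₁ ^ 2 + d * y₁ ^ 2 = 1 ∧ x₂ ^ 2 + d * y₂ ^ 2 = 1 ∧
        2 * x₁ * x₂ + 2 * d * y₁ * y₂ = -1) ∧
    (¬ ∃ (Λ : Submodule ℤ F) (b : Basis (Fin 2) ℤ Λ),
        ∀ i j, Algebra.trace ℚ F ((b i : F) * σ (b j : F)) =
          if i = j then 2 else -1) := by
  have P1 : ¬ ∃ x₁ y₁ x₂ y₂ : ℚ,
      x₁ ^ 2 + d * y₁ ^ 2 = 1 ∧ x₂ ^ 2 + d * y₂ ^ 2 = 1 ∧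
      2 * x₁ * x₂ + 2 * d * y₁ * y₂ = -1 := by
    rintro ⟨x₁, y₁, x₂, y₂, h1, h2, h3⟩
    have key : (d : ℚ) * (2 * (x₁ * y₂ - x₂ * y₁)) ^ 2 = ((3 : ℤ) : ℚ) := by
      push_cast
      nlinarith [h1, h2, h3, sq_nonneg (x₁ * y₂ - x₂ * y₁)]
    exact no_rat_sq d 3 hd1 hsq (Or.inl rfl) hne3 _ key
  refine ⟨P1, ?_⟩
  rintro ⟨Λ, bL, hB⟩
  set aM := algebraMap ℚ F with haM
  -- s^2 as algebraMap of a rational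
  obtain ⟨c, hc, hcd⟩ : ∃ c : ℚ, s ^ 2 = aM c ∧ (c = ((d : ℤ) : ℚ) ∨ c = -((d : ℤ) : ℚ)) := by
    rcases hs with h | h
    · exact ⟨((d : ℤ) : ℚ), by rw [h]; simp [haM], Or.inl rfl⟩
    · exact ⟨-((d : ℤ) : ℚ), by rw [h]; simp [haM], Or.inr rfl⟩
  have hli := li d hd1 hsq hne1 F s hs
  have hcard : Fintype.card (Fin 2) = finrank ℚ F := by simp [hdeg]
  set b : Basis (Fin 2) ℚ F := basisOfLinearIndependentOfCardEqFinrank hli hcard with hbdef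
  have hb : ⇑b = ![(1 : F), s] := coe_basisOfLinearIndependentOfCardEqFinrank hli hcard
  have hb0 : b 0 = 1 := by rw [hb]; rfl
  have hb1 : b 1 = s := by rw [hb]; rfl
  have hts : Algebra.trace ℚ F s = 0 := by
    rw [Algebra.trace_eq_matrix_trace b s, Matrix.trace, Fin.sum_univ_two]
    simp only [Matrix.diag]
    rw [Algebra.leftMulMatrix_eq_repr_mul, Algebra.leftMulMatrix_eq_repr_mul, hb0, hb1,
      mul_one, ← sq, hc]
    have h1 : b.repr s 0 = 0 := by
      rw [← hb1, b.repr_self]; simp [Finsupp.single_apply]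
    have h2 : b.repr (aM c) 1 = 0 := by
      have h3 : aM c = c • b 0 := by rw [hb0, Algebra.smul_def, mul_one]
      rw [h3, map_smul, b.repr_self]
      simp
    rw [h1, h2, add_zero]
  have htr : ∀ u v : ℚ, Algebra.trace ℚ F (aM u + aM v * s) = 2 * u := by
    intro u v
    have h1 : aM v * s = v • s := (Algebra.smul_def v s).symm
    rw [map_add, h1, map_smul, hts, smul_zero, add_zero, haM,
      Algebra.trace_algebraMap, hdeg]
    push_cast
    ring
  -- decomposition of any element of F
  have hdec : ∀ e : F, ∃ x y : ℚ, e = aM x + aM y * s := by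
    intro e
    refine ⟨b.repr e 0, b.repr e 1, ?_⟩
    have h1 := b.sum_repr e
    rw [Fin.sum_univ_two, hb0, hb1, Algebra.smul_def, Algebra.smul_def, mul_one] at h1
    exact h1.symm
  -- σ s = ± s
  have hσs : σ s = s ∨ σ s = -s := by
    have h2 : (σ s) ^ 2 = s ^ 2 := by rw [← map_pow, hc, haM]; exact σ.commutes c
    have h3 : (σ s - s) * (σ s + s) = 0 := by linear_combination h2
    rcases mul_eq_zero.mp h3 with h4 | h4
    · exact Or.inl (sub_eq_zero.mp h4)
    · exact Or.inr (eq_neg_of_add_eq_zero_left h4)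
  -- an embedding into ℂ
  obtain ⟨φ⟩ : Nonempty (F →+* ℂ) := by
    have hcard2 := NumberField.Embeddings.card F ℂ
    rw [hdeg] at hcard2
    exact Fintype.card_pos_iff.mp (by rw [hcard2]; norm_num)
  have hφc : ∀ q : ℚ, φ (aM q) = (q : ℂ) := by
    intro q
    have h1 := eq_ratCast (φ.comp (algebraMap ℚ F)) q
    simpa [haM] using h1
  have hz2 : (φ s) ^ 2 = (c : ℂ) := by rw [← map_pow, hc, hφc]
  have hreal : (φ s).re * (φ s).re - (φ s).im * (φ s).im = ((c : ℚ) : ℝ) := by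
    have h5 := congrArg Complex.re hz2
    rwa [sq, Complex.mul_re, Complex.ratCast_re] at h5
  -- rule out bad sign combinations and establish the trace form
  have hform : ∀ x y x' y' : ℚ,
      Algebra.trace ℚ F ((aM x + aM y * s) * σ (aM x' + aM y' * s)) =
        2 * (x * x' + (d : ℚ) * y * y') := by
    have hσaM : ∀ x y : ℚ, σ (aM x + aM y * s) = aM x + aM y * σ s := by
      intro x y
      rw [map_add, map_mul, haM, σ.commutes, σ.commutes]
    rcases hσs with hss | hss <;> rcases hcd with hcc | hcc
    · -- σ s = s, c = d : real case
      intro x y x' y'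
      rw [hσaM, hss]
      have hprod : (aM x + aM y * s) * (aM x' + aM y' * s)
          = aM (x * x' + c * y * y') + aM (x * y' + y * x') * s := by
        simp only [map_add, map_mul]
        linear_combination (aM y * aM y') * hc
      rw [hprod, htr, hcc]
    · -- σ s = s, c = -d : impossible
      exfalso
      have hconj : (starRingEnd ℂ) (φ s) = φ s := by rw [← hσ φ s, hss]
      have him : (φ s).im = 0 := Complex.conj_eq_iff_im.mp hconj
      rw [hcc] at hreal
      push_cast at hreal
      nlinarith [sq_nonneg (φ s).re, hreal, him, (by exact_mod_cast hd1 : (1:ℝ) ≤ (d:ℝ))]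
    · -- σ s = -s, c = d : impossible
      exfalso
      have hconj : (starRingEnd ℂ) (φ s) = -φ s := by rw [← hσ φ s, hss, map_neg]
      have hre0 : (φ s).re = 0 := by
        have := congrArg Complex.re hconj
        simp only [Complex.conj_re, Complex.neg_re] at this
        linarith
      rw [hcc] at hreal
      push_cast at hreal
      nlinarith [sq_nonneg (φ s).im, hreal, hre0, (by exact_mod_cast hd1 : (1:ℝ) ≤ (d:ℝ))]
    · -- σ s = -s, c = -d : imaginary case
      intro x y x' y'
      rw [hσaM, hss]
      have hprod : (aM x + aM y * s) * (aM x' + aM y' * (-s))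
          = aM (x * x' - c * y * y') + aM (y * x' - x * y') * s := by
        simp only [map_add, map_mul, map_sub]
        linear_combination (-(aM y * aM y')) * hc
      rw [hprod, htr, hcc]
      push_cast
      ring
  -- extract coordinates of the basis vectors
  obtain ⟨x₁, y₁, he1⟩ := hdec (bL 0 : F)
  obtain ⟨x₂, y₂, he2⟩ := hdec (bL 1 : F)
  have h00 := hB 0 0
  have h01 := hB 0 1
  have h11 := hB 1 1
  rw [if_pos rfl] at h00 h11
  rw [if_neg (by decide)] at h01
  rw [he1] at h00 h01
  rw [he2] at h11 h01
  rw [hform] at h00 h01 h11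
  exact P1 ⟨x₁, y₁, x₂, y₂, by linear_combination h00 / 2, by linear_combination h11 / 2,
    by linear_combination h01⟩
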